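/- arXiv:1709.02188 — 2 statements merged into one kernel-verified Lean document; each statement's English description precedes it below -/
import Mathlib

section
/- Let φ : ℂ → ℂ be holomorphic on the open unit disk 𝔻, let H > 0 and 0 < α ≤ 1, and suppose |φ(z₁) − φ(z₂)| ≤ H·|φ′(0)|·|z₁ − z₂|^α for all z₁, z₂ ∈ 𝔻. Then for every z ∈ 𝔻 one has |φ′(z)| ≤ H·|φ′(0)|·(1/(1 − |z|))^{1−α}. -/
open Complex Metric

/-- Hardy–Littlewood, one direction: the Hölder condition implies the derivative
growth bound with the same constant. -/
theorem hardy_littlewood_deriv_bound (φ : ℂ → ℂ) (H α : ℝ)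
    (hH : 0 < H) (hα : 0 < α) (hα1 : α ≤ 1)
    (hdiff : DifferentiableOn ℂ φ (ball (0 : ℂ) 1))
    (hHol : ∀ z₁ ∈ ball (0 : ℂ) 1, ∀ z₂ ∈ ball (0 : ℂ) 1,
      ‖φ z₁ - φ z₂‖ ≤ H * ‖deriv φ 0‖ * ‖z₁ - z₂‖ ^ α) :
    ∀ z ∈ ball (0 : ℂ) 1,
      ‖deriv φ z‖ ≤ H * ‖deriv φ 0‖ * (1 / (1 - ‖z‖)) ^ (1 - α) := by
  intro z hz
  set C : ℝ := H * ‖deriv φ 0‖ with hC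
  have hC0 : 0 ≤ C := mul_nonneg hH.le (norm_nonneg _)
  have hz1 : ‖z‖ < 1 := by simpa using hz
  set d : ℝ := 1 - ‖z‖ with hd
  have hd0 : 0 < d := by simp only [hd]; linarith
  -- key estimate for every radius r < d
  have key : ∀ r ∈ Set.Ioo (0:ℝ) d, ‖deriv φ z‖ ≤ C * r ^ (α - 1) := by
    intro r hr
    obtain ⟨hr0, hrd⟩ := hr
    have hsub : closedBall z r ⊆ ball (0 : ℂ) 1 := by
      intro w hw
      simp only [mem_closedBall, dist_eq_norm] at hw
      simp only [mem_ball, dist_eq_norm, sub_zero]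
      calc ‖w‖ ≤ ‖z‖ + ‖w - z‖ := norm_le_norm_add_norm_sub' w z
        _ ≤ ‖z‖ + r := by linarith
        _ < 1 := by simp only [hd] at hrd; linarith
    have hdcl : DiffContOnCl ℂ (fun w => φ w - φ z) (ball z r) := by
      apply DifferentiableOn.diffContOnCl
      rw [closure_ball z hr0.ne']
      exact ((hdiff.mono hsub).sub_const _)
    have hsph : ∀ w ∈ sphere z r, ‖φ w - φ z‖ ≤ C * r ^ α := by
      intro w hw
      have hwr : ‖w - z‖ = r := by
        simpa [dist_eq_norm] using (mem_sphere_iff_norm.mp hw)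
      have hw1 : w ∈ ball (0 : ℂ) 1 := hsub (sphere_subset_closedBall hw)
      have := hHol w hw1 z hz
      rwa [hwr] at this
    have hest := norm_deriv_le_of_forall_mem_sphere_norm_le hr0 hdcl hsph
    have hder : deriv (fun w => φ w - φ z) z = deriv φ z := by
      simp [deriv_sub_const]
    rw [hder] at hest
    calc ‖deriv φ z‖ ≤ C * r ^ α / r := hest
      _ = C * r ^ (α - 1) := by
          rw [Real.rpow_sub hr0, Real.rpow_one, mul_div_assoc]
  -- take the limit r → d⁻
  have hlim : Filter.Tendsto (fun r : ℝ => C * r ^ (α - 1)) (nhdsWithin d (Set.Iio d))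
      (nhds (C * d ^ (α - 1))) := by
    apply Filter.Tendsto.mono_left _ nhdsWithin_le_nhds
    exact (Filter.tendsto_id.rpow_const (Or.inl hd0.ne')).const_mul C
  have hmain : ‖deriv φ z‖ ≤ C * d ^ (α - 1) := by
    refine ge_of_tendsto hlim ?_
    filter_upwards [self_mem_nhdsWithin, mem_nhdsWithin_of_mem_nhds (Ioi_mem_nhds hd0)] with r hr1 hr2
    exact key r ⟨hr2, hr1⟩
  have heq : (1 / d) ^ (1 - α) = d ^ (α - 1) := by
    rw [one_div, Real.inv_rpow hd0.le, ← Real.rpow_neg hd0.le, neg_sub]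
  rw [hC] at hmain
  rw [← heq] at hmain
  exact hmain
end

section
/- There exists an absolute constant c > 0 with the following property. Let φ : ℂ → ℂ be holomorphic on the open unit disk 𝔻, let M > 0 and 0 < α ≤ 1, and suppose |φ′(z)| ≤ M·|φ′(0)|·(1/(1 − |z|))^{1−α} for every z ∈ 𝔻. Then |φ(z₁) − φ(z₂)| ≤ (c·M/α)·|φ′(0)|·|z₁ − z₂|^α for all z₁, z₂ ∈ 𝔻. -/
open Metric Set

/-!
With `K = M‖φ'(0)‖`, integrating the bound `‖φ'(z)‖ ≤ K (1 - ‖z‖) ^ (α - 1)` along a radius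
shows that `φ` moves by at most `K (1 - r) ^ α / α` between `r z` and `z`, while on the disc of
radius `1 - δ` the same bound makes `φ` Lipschitz with constant `K δ ^ (α - 1)`. For
`δ = ‖z₁ - z₂‖ < 1`, go from `z₁` radially in to `(1 - δ) z₁`, across to `(1 - δ) z₂` and out
to `z₂`: each leg costs at most `K δ ^ α / α`. For `δ ≥ 1`, pass through the origin instead.
-/

section

variable {E F : Type*} [NormedAddCommGroup E] [NormedSpace ℝ E]
  [NormedAddCommGroup F] [NormedSpace ℝ F] {f : E → F} {K α : ℝ}

lemma nonneg_of_norm_fderiv_le_mul_rpow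
    (hbound : ∀ z ∈ ball (0 : E) 1, ‖fderiv ℝ f z‖ ≤ K * (1 - ‖z‖) ^ (α - 1)) : 0 ≤ K := by
  simpa using (norm_nonneg _).trans (hbound 0 (mem_ball_self one_pos))

lemma norm_sub_smul_le_of_norm_fderiv_le_mul_rpow (hα : 0 < α) (hα1 : α ≤ 1)
    (hf : DifferentiableOn ℝ f (ball 0 1))
    (hbound : ∀ z ∈ ball (0 : E) 1, ‖fderiv ℝ f z‖ ≤ K * (1 - ‖z‖) ^ (α - 1))
    {z : E} (hz : z ∈ ball (0 : E) 1) {r : ℝ} (hr0 : 0 ≤ r) (hr1 : r ≤ 1) :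
    ‖f z - f (r • z)‖ ≤ K / α * (1 - r) ^ α := by
  have hK := nonneg_of_norm_fderiv_le_mul_rpow hbound
  have hzn : ‖z‖ < 1 := mem_ball_zero_iff.1 hz
  have hnorm : ∀ t ∈ Icc r 1, ‖t • z‖ ≤ t := fun t ht => by
    rw [norm_smul, Real.norm_of_nonneg (hr0.trans ht.1)]
    exact mul_le_of_le_one_right (hr0.trans ht.1) hzn.le
  have hmem : ∀ t ∈ Icc r 1, t • z ∈ ball (0 : E) 1 := fun t ht => by
    rw [mem_ball_zero_iff, norm_smul, Real.norm_of_nonneg (hr0.trans ht.1)]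
    exact (mul_le_of_le_one_left (norm_nonneg z) ht.2).trans_lt hzn
  have hderiv : ∀ t ∈ Icc r 1,
      HasDerivAt (fun s : ℝ => f (s • z) - f (r • z)) (fderiv ℝ f (t • z) z) t := fun t ht => by
    have := (hf.differentiableAt (isOpen_ball.mem_nhds (hmem t ht))).hasFDerivAt.comp_hasDerivAt t
      ((hasDerivAt_id t).smul_const z)
    simpa using this.sub_const (f (r • z))
  have hB : ∀ t ∈ Ico r 1, HasDerivWithinAt (fun t => K / α * ((1 - r) ^ α - (1 - t) ^ α))
      (K * (1 - t) ^ (α - 1)) (Ici t) t := fun t ht => by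
    have h := ((((hasDerivAt_id' t).const_sub 1).rpow_const (p := α)
      (Or.inl (sub_ne_zero.2 ht.2.ne'))).const_sub ((1 - r) ^ α)).const_mul (K / α)
    refine (h.congr_deriv ?_).hasDerivWithinAt
    field_simp
  have hbound' : ∀ t ∈ Ico r 1, ‖fderiv ℝ f (t • z) z‖ ≤ K * (1 - t) ^ (α - 1) := fun t ht => by
    have ht' := Ico_subset_Icc_self ht
    calc ‖fderiv ℝ f (t • z) z‖ ≤ ‖fderiv ℝ f (t • z)‖ * ‖z‖ := (fderiv ℝ f (t • z)).le_opNorm z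
      _ ≤ ‖fderiv ℝ f (t • z)‖ := mul_le_of_le_one_right (norm_nonneg _) hzn.le
      _ ≤ K * (1 - ‖t • z‖) ^ (α - 1) := hbound _ (hmem t ht')
      _ ≤ K * (1 - t) ^ (α - 1) := by
        gcongr K * ?_
        exact Real.rpow_le_rpow_of_nonpos (sub_pos.2 ht.2) (by linarith [hnorm t ht'])
          (by linarith)
  have key := image_norm_le_of_norm_deriv_right_le_deriv_boundary'
    (fun t ht => (hderiv t ht).continuousAt.continuousWithinAt)
    (fun t ht => (hderiv t (Ico_subset_Icc_self ht)).hasDerivWithinAt)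
    (by simp)
    (continuousOn_const.mul (continuousOn_const.sub
      ((continuousOn_const.sub continuousOn_id).rpow_const fun _ _ => Or.inr hα.le)))
    hB hbound' (right_mem_Icc.2 hr1)
  simpa [Real.zero_rpow hα.ne'] using key

lemma norm_sub_le_of_mem_closedBall_of_norm_fderiv_le_mul_rpow (hα1 : α ≤ 1)
    (hf : DifferentiableOn ℝ f (ball 0 1))
    (hbound : ∀ z ∈ ball (0 : E) 1, ‖fderiv ℝ f z‖ ≤ K * (1 - ‖z‖) ^ (α - 1))
    {r : ℝ} (hr : r < 1) {x y : E} (hx : x ∈ closedBall 0 r) (hy : y ∈ closedBall 0 r) :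
    ‖f x - f y‖ ≤ K * (1 - r) ^ (α - 1) * ‖x - y‖ := by
  have hK := nonneg_of_norm_fderiv_le_mul_rpow hbound
  have hsub : closedBall (0 : E) r ⊆ ball 0 1 := closedBall_subset_ball hr
  refine (convex_closedBall 0 r).norm_image_sub_le_of_norm_fderiv_le
    (fun w hw => hf.differentiableAt (isOpen_ball.mem_nhds (hsub hw))) (fun w hw => ?_) hy hx
  have hw' : ‖w‖ ≤ r := mem_closedBall_zero_iff.1 hw
  calc ‖fderiv ℝ f w‖ ≤ K * (1 - ‖w‖) ^ (α - 1) := hbound w (hsub hw)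
    _ ≤ K * (1 - r) ^ (α - 1) := by
      gcongr K * ?_
      exact Real.rpow_le_rpow_of_nonpos (sub_pos.2 hr) (by linarith) (by linarith)

lemma norm_sub_le_mul_rpow_of_norm_sub_lt_one (hα : 0 < α) (hα1 : α ≤ 1)
    (hf : DifferentiableOn ℝ f (ball 0 1))
    (hbound : ∀ z ∈ ball (0 : E) 1, ‖fderiv ℝ f z‖ ≤ K * (1 - ‖z‖) ^ (α - 1))
    {z₁ z₂ : E} (hz₁ : z₁ ∈ ball (0 : E) 1) (hz₂ : z₂ ∈ ball (0 : E) 1)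
    (hδ1 : ‖z₁ - z₂‖ < 1) :
    ‖f z₁ - f z₂‖ ≤ 3 * K / α * ‖z₁ - z₂‖ ^ α := by
  obtain rfl | hne := eq_or_ne z₁ z₂
  · simp [Real.zero_rpow hα.ne']
  have hK := nonneg_of_norm_fderiv_le_mul_rpow hbound
  set δ := ‖z₁ - z₂‖
  have hδ0 : 0 < δ := norm_pos_iff.2 (sub_ne_zero.2 hne)
  set r := 1 - δ with hr
  have hr0 : 0 ≤ r := by linarith
  have hr1 : r ≤ 1 := by linarith
  have hradial {z : E} (hz : z ∈ ball (0 : E) 1) : ‖f z - f (r • z)‖ ≤ K / α * δ ^ α := by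
    simpa [hr] using norm_sub_smul_le_of_norm_fderiv_le_mul_rpow hα hα1 hf hbound hz hr0 hr1
  have hmem {z : E} (hz : z ∈ ball (0 : E) 1) : r • z ∈ closedBall (0 : E) r := by
    rw [mem_closedBall_zero_iff, norm_smul, Real.norm_of_nonneg hr0]
    exact mul_le_of_le_one_right hr0 (mem_ball_zero_iff.1 hz).le
  have hmid : ‖f (r • z₁) - f (r • z₂)‖ ≤ K / α * δ ^ α := calc
    ‖f (r • z₁) - f (r • z₂)‖ ≤ K * (1 - r) ^ (α - 1) * ‖r • z₁ - r • z₂‖ :=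
        norm_sub_le_of_mem_closedBall_of_norm_fderiv_le_mul_rpow hα1 hf hbound (by linarith)
          (hmem hz₁) (hmem hz₂)
    _ ≤ K * δ ^ (α - 1) * δ := by
        rw [← smul_sub, norm_smul, Real.norm_of_nonneg hr0, hr, sub_sub_cancel]
        gcongr
        exact mul_le_of_le_one_left hδ0.le (by linarith)
    _ = K * δ ^ α := by rw [mul_assoc, Real.rpow_sub_one hδ0.ne', div_mul_cancel₀ _ hδ0.ne']
    _ ≤ K / α * δ ^ α := by
        rw [div_mul_eq_mul_div, le_div_iff₀ hα]
        exact mul_le_of_le_one_right (by positivity) hα1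
  calc ‖f z₁ - f z₂‖
      ≤ ‖f z₁ - f (r • z₁)‖ + ‖f (r • z₁) - f (r • z₂)‖ + ‖f z₂ - f (r • z₂)‖ := by
        rw [norm_sub_rev (f z₂)]
        simpa only [dist_eq_norm] using dist_triangle4 (f z₁) (f (r • z₁)) (f (r • z₂)) (f z₂)
    _ ≤ K / α * δ ^ α + K / α * δ ^ α + K / α * δ ^ α :=
        add_le_add (add_le_add (hradial hz₁) hmid) (hradial hz₂)
    _ = 3 * K / α * δ ^ α := by ring

theorem norm_sub_le_mul_rpow_of_norm_fderiv_le_mul_rpow (hα : 0 < α) (hα1 : α ≤ 1)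
    (hf : DifferentiableOn ℝ f (ball 0 1))
    (hbound : ∀ z ∈ ball (0 : E) 1, ‖fderiv ℝ f z‖ ≤ K * (1 - ‖z‖) ^ (α - 1))
    {z₁ z₂ : E} (hz₁ : z₁ ∈ ball (0 : E) 1) (hz₂ : z₂ ∈ ball (0 : E) 1) :
    ‖f z₁ - f z₂‖ ≤ 3 * K / α * ‖z₁ - z₂‖ ^ α := by
  rcases lt_or_ge ‖z₁ - z₂‖ 1 with hδ1 | hδ1
  · exact norm_sub_le_mul_rpow_of_norm_sub_lt_one hα hα1 hf hbound hz₁ hz₂ hδ1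
  have hK := nonneg_of_norm_fderiv_le_mul_rpow hbound
  have hradial {z : E} (hz : z ∈ ball (0 : E) 1) : ‖f z - f 0‖ ≤ K / α := by
    simpa using norm_sub_smul_le_of_norm_fderiv_le_mul_rpow hα hα1 hf hbound hz le_rfl zero_le_one
  calc ‖f z₁ - f z₂‖ ≤ ‖f z₁ - f 0‖ + ‖f z₂ - f 0‖ := by
        rw [norm_sub_rev (f z₂)]
        exact norm_sub_le_norm_sub_add_norm_sub ..
    _ ≤ K / α + K / α := add_le_add (hradial hz₁) (hradial hz₂)
    _ ≤ 3 * K / α * ‖z₁ - z₂‖ ^ α := by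
        have : 1 ≤ ‖z₁ - z₂‖ ^ α := Real.one_le_rpow hδ1 hα.le
        rw [mul_div_assoc]
        nlinarith [div_nonneg hK hα.le]

end

lemma norm_fderiv_real_eq_norm_deriv {f : ℂ → ℂ} {z : ℂ} (hf : DifferentiableAt ℂ f z) :
    ‖fderiv ℝ f z‖ = ‖deriv f z‖ := by
  rw [hf.fderiv_restrictScalars ℝ, ContinuousLinearMap.norm_restrictScalars,
    norm_deriv_eq_norm_fderiv]

lemma one_div_rpow_one_sub_eq {x : ℝ} (hx : 0 ≤ x) (α : ℝ) :
    (1 / x) ^ (1 - α) = x ^ (α - 1) := by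
  rw [one_div, Real.inv_rpow hx, ← Real.rpow_neg hx, neg_sub]

/-- Hardy–Littlewood, converse direction: the derivative growth bound implies the
Hölder condition with constant `c * M / α`, `c` an absolute constant. -/
theorem hardy_littlewood_holder_bound :
    ∃ c : ℝ, 0 < c ∧
      ∀ (φ : ℂ → ℂ) (M α : ℝ), 0 < M → 0 < α → α ≤ 1 →
        DifferentiableOn ℂ φ (ball (0 : ℂ) 1) →
        (∀ z ∈ ball (0 : ℂ) 1,
          ‖deriv φ z‖ ≤ M * ‖deriv φ 0‖ * (1 / (1 - ‖z‖)) ^ (1 - α)) →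
        ∀ z₁ ∈ ball (0 : ℂ) 1, ∀ z₂ ∈ ball (0 : ℂ) 1,
          ‖φ z₁ - φ z₂‖ ≤ (c * M / α) * ‖deriv φ 0‖ * ‖z₁ - z₂‖ ^ α := by
  refine ⟨3, three_pos, fun φ M α _ hα hα1 hφ hd z₁ hz₁ z₂ hz₂ => ?_⟩
  have hbound : ∀ z ∈ ball (0 : ℂ) 1,
      ‖fderiv ℝ φ z‖ ≤ M * ‖deriv φ 0‖ * (1 - ‖z‖) ^ (α - 1) := fun z hz => by
    rw [norm_fderiv_real_eq_norm_deriv (hφ.differentiableAt (isOpen_ball.mem_nhds hz)),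
      ← one_div_rpow_one_sub_eq (sub_nonneg.2 (mem_ball_zero_iff.1 hz).le)]
    exact hd z hz
  calc ‖φ z₁ - φ z₂‖ ≤ 3 * (M * ‖deriv φ 0‖) / α * ‖z₁ - z₂‖ ^ α :=
        norm_sub_le_mul_rpow_of_norm_fderiv_le_mul_rpow hα hα1 (hφ.restrictScalars ℝ) hbound
          hz₁ hz₂
    _ = 3 * M / α * ‖deriv φ 0‖ * ‖z₁ - z₂‖ ^ α := by ring
end
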